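/- arXiv:1909.09717 — 2 statements merged into one kernel-verified Lean document; each statement's English description precedes it below -/
import Mathlib

section
/- Let A be a normed division algebra. Then the associator [a,b,c] = (a*b)*c − a*(b*c) is alternating: for all a, b ∈ A one has [a,a,b] = 0, [a,b,b] = 0, and [a,b,a] = 0; equivalently, the trilinear map (a,b,c) ↦ [a,b,c] is totally skew-symmetric in its arguments. -/
open scoped RealInnerProductSpace

/-- A normed division algebra: a real inner product space with an `ℝ`-bilinear
multiplication (not necessarily associative or commutative), a two-sided
multiplicative identity `one ≠ 0`, satisfying `‖a*b‖ = ‖a‖ * ‖b‖`. -/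
structure NormedDivisionAlgebra (A : Type*) [NormedAddCommGroup A] [InnerProductSpace ℝ A] where
  mul : A →ₗ[ℝ] A →ₗ[ℝ] A
  one : A
  one_ne_zero : one ≠ 0
  one_mul : ∀ a : A, mul one a = a
  mul_one : ∀ a : A, mul a one = a
  norm_mul : ∀ a b : A, ‖mul a b‖ = ‖a‖ * ‖b‖

namespace NormedDivisionAlgebra

variable {A : Type*} [NormedAddCommGroup A] [InnerProductSpace ℝ A]

/-- `Re a`: the orthogonal projection of `a` onto the real part `Re A = ℝ · 1`. -/
noncomputable def re (D : NormedDivisionAlgebra A) (a : A) : A :=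
  (⟪a, D.one⟫ / ‖D.one‖ ^ 2) • D.one

/-- `Im a`: the orthogonal projection of `a` onto the imaginary part `Im A = (ℝ · 1)ᗮ`. -/
noncomputable def im (D : NormedDivisionAlgebra A) (a : A) : A := a - D.re a

/-- The conjugate `conj a = Re a - Im a`. -/
noncomputable def conj (D : NormedDivisionAlgebra A) (a : A) : A := D.re a - D.im a

/-- The real part `Re A = ℝ · 1` as a submodule. -/
def ReSub (D : NormedDivisionAlgebra A) : Submodule ℝ A := Submodule.span ℝ {D.one}

/-- The imaginary part `Im A = (ℝ · 1)ᗮ` as a submodule. -/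
noncomputable def ImSub (D : NormedDivisionAlgebra A) : Submodule ℝ A := (Submodule.span ℝ {D.one})ᗮ

/-- The commutator `[a, b] = a*b - b*a`. -/
def comm (D : NormedDivisionAlgebra A) (a b : A) : A := D.mul a b - D.mul b a

/-- The associator `[a, b, c] = (a*b)*c - a*(b*c)`. -/
def assoc (D : NormedDivisionAlgebra A) (a b c : A) : A :=
  D.mul (D.mul a b) c - D.mul a (D.mul b c)

/-- The cross product `a × b = Im (a*b)` (intended for `a, b ∈ Im A`). -/
noncomputable def cross (D : NormedDivisionAlgebra A) (a b : A) : A := D.im (D.mul a b)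

end NormedDivisionAlgebra

/-!
Polarizing `‖a * b‖² = ‖a‖² ‖b‖²` in each argument gives
`⟪a * c, b * d⟫ + ⟪a * d, b * c⟫ = 2 ⟪a, b⟫ ⟪c, d⟫`; putting `1` in one slot shows that left and
right multiplication by `a` have adjoint multiplication by `2 ⟪a, 1⟫ 1 - a`.
From this `a * a = 2 ⟪a, 1⟫ a - ‖a‖² 1`, and testing against arbitrary `c` gives the alternative
laws `a * (a * b) = (a * a) * b` and `(a * b) * b = a * (b * b)`. Since the associator is additive
in each argument, vanishing on `[a, a, c]` and `[a, b, b]` makes it skew under those transpositions,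
and hence totally skew.
-/

namespace NormedDivisionAlgebra

variable {A : Type*} [NormedAddCommGroup A] [InnerProductSpace ℝ A] (D : NormedDivisionAlgebra A)

lemma norm_mul_sq (a b : A) : ‖D.mul a b‖ ^ 2 = ‖a‖ ^ 2 * ‖b‖ ^ 2 := by
  rw [D.norm_mul, mul_pow]

lemma inner_mul_mul_left (a b c : A) : ⟪D.mul a b, D.mul a c⟫ = ‖a‖ ^ 2 * ⟪b, c⟫ := by
  have h := D.norm_mul_sq a (b + c)
  rw [map_add, norm_add_sq_real, norm_add_sq_real, norm_mul_sq, norm_mul_sq] at h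
  linarith

lemma inner_mul_mul_right (a b c : A) : ⟪D.mul a c, D.mul b c⟫ = ⟪a, b⟫ * ‖c‖ ^ 2 := by
  have h := D.norm_mul_sq (a + b) c
  rw [map_add, LinearMap.add_apply, norm_add_sq_real, norm_add_sq_real, norm_mul_sq,
    norm_mul_sq] at h
  linarith

lemma inner_mul_mul_add_inner_mul_mul (a b c d : A) :
    ⟪D.mul a c, D.mul b d⟫ + ⟪D.mul a d, D.mul b c⟫ = 2 * ⟪a, b⟫ * ⟪c, d⟫ := by
  have h := D.inner_mul_mul_right a b (c + d)
  rw [norm_add_sq_real] at h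
  simp only [map_add, inner_add_left, inner_add_right] at h
  linarith [D.inner_mul_mul_right a b c, D.inner_mul_mul_right a b d]

lemma inner_mul_left_eq (a c d : A) :
    ⟪D.mul a c, d⟫ = 2 * ⟪a, D.one⟫ * ⟪c, d⟫ - ⟪D.mul a d, c⟫ := by
  have h := D.inner_mul_mul_add_inner_mul_mul a D.one c d
  rw [D.one_mul, D.one_mul] at h
  linarith

lemma inner_mul_right_eq (a b d : A) :
    ⟪D.mul a d, b⟫ = 2 * ⟪d, D.one⟫ * ⟪a, b⟫ - ⟪a, D.mul b d⟫ := by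
  have h := D.inner_mul_mul_add_inner_mul_mul a b D.one d
  rw [D.mul_one, D.mul_one, real_inner_comm d D.one] at h
  linarith

lemma mul_self_eq (a : A) : D.mul a a = (2 * ⟪a, D.one⟫) • a - (‖a‖ ^ 2) • D.one := by
  refine ext_inner_right ℝ fun c => ?_
  have h := D.inner_mul_mul_left a c D.one
  rw [D.mul_one] at h
  rw [inner_mul_left_eq, h, inner_sub_left, real_inner_smul_left, real_inner_smul_left,
    real_inner_comm c D.one]

lemma mul_mul_self_left (a b : A) : D.mul a (D.mul a b) = D.mul (D.mul a a) b := by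
  rw [mul_self_eq]
  simp only [map_sub, map_smul, LinearMap.sub_apply, LinearMap.smul_apply, D.one_mul]
  refine ext_inner_right ℝ fun c => ?_
  rw [inner_mul_left_eq, inner_mul_mul_left, real_inner_comm b c, inner_sub_left,
    real_inner_smul_left, real_inner_smul_left]

lemma mul_mul_self_right (a b : A) : D.mul (D.mul a b) b = D.mul a (D.mul b b) := by
  rw [mul_self_eq]
  simp only [map_sub, map_smul, D.mul_one]
  refine ext_inner_right ℝ fun c => ?_
  rw [inner_mul_right_eq, inner_mul_mul_right, inner_sub_left, real_inner_smul_left,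
    real_inner_smul_left]
  ring

lemma assoc_self_left (a b : A) : D.assoc a a b = 0 := by
  rw [assoc, mul_mul_self_left, sub_self]

lemma assoc_self_right (a b : A) : D.assoc a b b = 0 := by
  rw [assoc, mul_mul_self_right, sub_self]

lemma assoc_add_left (a a' b c : A) : D.assoc (a + a') b c = D.assoc a b c + D.assoc a' b c := by
  simp only [assoc, map_add, LinearMap.add_apply]
  abel

lemma assoc_add_middle (a b b' c : A) :
    D.assoc a (b + b') c = D.assoc a b c + D.assoc a b' c := by
  simp only [assoc, map_add, LinearMap.add_apply]
  abel

lemma assoc_add_right (a b c c' : A) : D.assoc a b (c + c') = D.assoc a b c + D.assoc a b c' := by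
  simp only [assoc, map_add]
  abel

lemma assoc_swap_left (a b c : A) : D.assoc a b c = -D.assoc b a c := by
  have h := D.assoc_self_left (a + b) c
  rw [assoc_add_left, assoc_add_middle, assoc_add_middle, assoc_self_left, assoc_self_left,
    zero_add, add_zero] at h
  exact eq_neg_of_add_eq_zero_left h

lemma assoc_swap_right (a b c : A) : D.assoc a b c = -D.assoc a c b := by
  have h := D.assoc_self_right a (b + c)
  rw [assoc_add_middle, assoc_add_right, assoc_add_right, assoc_self_right, assoc_self_right,
    zero_add, add_zero] at h
  exact eq_neg_of_add_eq_zero_left h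

lemma assoc_self_outer (a b : A) : D.assoc a b a = 0 := by
  rw [assoc_swap_left, assoc_self_right, neg_zero]

lemma assoc_swap_outer (a b c : A) : D.assoc a b c = -D.assoc c b a := by
  rw [D.assoc_swap_right, D.assoc_swap_left a c b, D.assoc_swap_right c a b, neg_neg]

end NormedDivisionAlgebra

theorem nda_associator_alternating {A : Type*} [NormedAddCommGroup A] [InnerProductSpace ℝ A]
    (D : NormedDivisionAlgebra A) :
    (∀ a b : A, D.assoc a a b = 0) ∧
      (∀ a b : A, D.assoc a b b = 0) ∧
      (∀ a b : A, D.assoc a b a = 0) ∧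
      (∀ a b c : A, D.assoc a b c = - D.assoc b a c) ∧
      (∀ a b c : A, D.assoc a b c = - D.assoc a c b) ∧
      (∀ a b c : A, D.assoc a b c = - D.assoc c b a) :=
  ⟨D.assoc_self_left, D.assoc_self_right, D.assoc_self_outer, D.assoc_swap_left,
    D.assoc_swap_right, D.assoc_swap_outer⟩
end

section
/- Let A be a normed division algebra and let a, b, c ∈ Im A. Then a*(b*c) = −(1/2) • [a,b,c] − ⟨a*b, c⟩ • 1 − ⟨b,c⟩ • a + ⟨a,c⟩ • b − ⟨a,b⟩ • c, where [a,b,c] = (a*b)*c − a*(b*c) is the associator. -/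
open scoped RealInnerProductSpace

/-!
Polarizing `‖x * y‖ = ‖x‖ * ‖y‖` gives the exchange identity
`⟪x z, y w⟫ + ⟪x w, y z⟫ = 2 ⟪x, y⟫ ⟪z, w⟫`. Taking `y = 1` shows that left multiplication by an
imaginary `a` is skew-adjoint, and from this `a (b x) + b (a x) = -2 ⟪a, b⟫ x` for imaginary `a, b`.
Anticommuting `b` past `c`, then `a` past `c`, and finally `c` past `a * b` (whose real part is
`-⟪a, b⟫`) computes `a (b c) + (a b) c`, and `a (b c)` is half of this minus half the associator.
-/

namespace NormedDivisionAlgebra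

variable {A : Type*} [NormedAddCommGroup A] [InnerProductSpace ℝ A] (D : NormedDivisionAlgebra A)

theorem mem_ImSub_iff {a : A} : a ∈ D.ImSub ↔ ⟪a, D.one⟫ = 0 :=
  Submodule.mem_orthogonal_singleton_iff_inner_left

theorem norm_one : ‖D.one‖ = 1 := by
  have h : ‖D.one‖ * ‖D.one‖ = ‖D.one‖ * 1 := by rw [← D.norm_mul, D.mul_one, _root_.mul_one]
  exact mul_left_cancel₀ (norm_ne_zero_iff.mpr D.one_ne_zero) h

theorem inner_mul_mul_same_left (x y z : A) :
    ⟪D.mul x y, D.mul x z⟫ = ‖x‖ ^ 2 * ⟪y, z⟫ := by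
  rw [real_inner_eq_norm_add_mul_self_sub_norm_mul_self_sub_norm_mul_self_div_two,
    real_inner_eq_norm_add_mul_self_sub_norm_mul_self_sub_norm_mul_self_div_two y z,
    ← map_add, D.norm_mul, D.norm_mul, D.norm_mul]
  ring

theorem inner_mul_mul_add_inner_mul_mul_s12 (x y z w : A) :
    ⟪D.mul x z, D.mul y w⟫ + ⟪D.mul x w, D.mul y z⟫ = 2 * ⟪x, y⟫ * ⟪z, w⟫ := by
  have h := D.inner_mul_mul_same_left (x + y) z w
  simp only [map_add, LinearMap.add_apply, inner_add_left, inner_add_right, norm_add_sq_real,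
    D.inner_mul_mul_same_left] at h
  rw [real_inner_comm (D.mul x w)] at h
  linarith

variable {D}

theorem inner_mul_left_eq_neg {a : A} (ha : a ∈ D.ImSub) (x y : A) :
    ⟪D.mul a x, y⟫ = -⟪x, D.mul a y⟫ := by
  have h := D.inner_mul_mul_add_inner_mul_mul_s12 a D.one x y
  rw [D.one_mul, D.one_mul, (D.mem_ImSub_iff).mp ha, real_inner_comm x] at h
  linarith

theorem inner_mul_one {a : A} (ha : a ∈ D.ImSub) (b : A) : ⟪D.mul a b, D.one⟫ = -⟪a, b⟫ := by
  rw [inner_mul_left_eq_neg ha, D.mul_one, real_inner_comm]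

theorem mul_mul_add_mul_mul_swap {a b : A} (ha : a ∈ D.ImSub) (hb : b ∈ D.ImSub) (x : A) :
    D.mul a (D.mul b x) + D.mul b (D.mul a x) = (-2 * ⟪a, b⟫) • x := by
  refine ext_inner_right ℝ fun v => ?_
  have h := D.inner_mul_mul_add_inner_mul_mul_s12 b a x v
  rw [real_inner_comm (D.mul a x), real_inner_comm a] at h
  rw [inner_add_left, inner_mul_left_eq_neg ha (D.mul b x), inner_mul_left_eq_neg hb (D.mul a x),
    real_inner_smul_left]
  linarith

theorem mul_add_mul_swap {a b : A} (ha : a ∈ D.ImSub) (hb : b ∈ D.ImSub) :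
    D.mul a b + D.mul b a = (-2 * ⟪a, b⟫) • D.one := by
  simpa only [D.mul_one] using mul_mul_add_mul_mul_swap ha hb D.one

theorem mul_add_mul_swap_of_left_mem_ImSub {a : A} (ha : a ∈ D.ImSub) (x : A) :
    D.mul a x + D.mul x a = (2 * ⟪x, D.one⟫) • a - (2 * ⟪a, x⟫) • D.one := by
  set r := ⟪x, D.one⟫
  have hy : x - r • D.one ∈ D.ImSub := by
    rw [D.mem_ImSub_iff, inner_sub_left, real_inner_smul_left, real_inner_self_eq_norm_sq,
      D.norm_one]
    ring
  have h := mul_add_mul_swap ha hy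
  have hinner : ⟪a, x - r • D.one⟫ = ⟪a, x⟫ := by
    rw [inner_sub_right, real_inner_smul_right, (D.mem_ImSub_iff).mp ha, mul_zero, sub_zero]
  simp only [map_sub, map_smul, LinearMap.sub_apply, LinearMap.smul_apply, D.one_mul,
    D.mul_one, hinner] at h
  linear_combination (norm := module) h

theorem mul_mul_add_mul_mul_eq {a b c : A} (ha : a ∈ D.ImSub) (hb : b ∈ D.ImSub)
    (hc : c ∈ D.ImSub) :
    D.mul a (D.mul b c) + D.mul (D.mul a b) c =
      (-2 : ℝ) • (⟪D.mul a b, c⟫ • D.one + ⟪b, c⟫ • a - ⟪a, c⟫ • b + ⟪a, b⟫ • c) := by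
  have hbc : D.mul a (D.mul b c) + D.mul a (D.mul c b) = (-2 * ⟪b, c⟫) • a := by
    rw [← map_add, mul_add_mul_swap hb hc, map_smul, D.mul_one]
  have hac := mul_mul_add_mul_mul_swap ha hc b
  have habc := mul_add_mul_swap_of_left_mem_ImSub hc (D.mul a b)
  rw [inner_mul_one ha, real_inner_comm (D.mul a b) c] at habc
  linear_combination (norm := module) hbc - hac + habc

end NormedDivisionAlgebra

theorem nda_mul_mul_expansion {A : Type*} [NormedAddCommGroup A] [InnerProductSpace ℝ A]
    (D : NormedDivisionAlgebra A) (a b c : A)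
    (ha : a ∈ D.ImSub) (hb : b ∈ D.ImSub) (hc : c ∈ D.ImSub) :
    D.mul a (D.mul b c) =
      (-(1 / 2 : ℝ)) • D.assoc a b c - ⟪D.mul a b, c⟫ • D.one
        - ⟪b, c⟫ • a + ⟪a, c⟫ • b - ⟪a, b⟫ • c := by
  have h := NormedDivisionAlgebra.mul_mul_add_mul_mul_eq ha hb hc
  rw [NormedDivisionAlgebra.assoc]
  linear_combination (norm := module) (1 / 2 : ℝ) • h
end
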